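/- Let P, Q, K ∈ ℝ^{n×n} be symmetric positive definite, W ∈ ℝ^{n×n}, Γ ∈ ℝ^{n} nonzero, R = Γᵀ(Q + K)Γ. Then the matrix K' = P + WᵀKW - R^{-1}·WᵀKΓΓᵀKW is symmetric positive definite. -/

import Mathlib

open Matrix

lemma sym_dot (n : ℕ) (K : Matrix (Fin n) (Fin n) ℝ) (hK : Kᵀ = K)
    (u v : Fin n → ℝ) : u ⬝ᵥ K.mulVec v = v ⬝ᵥ K.mulVec u := by
  rw [dotProduct_mulVec, ← mulVec_transpose, hK, dotProduct_comm]

lemma cauchy_schwarz_K (n : ℕ) (K : Matrix (Fin n) (Fin n) ℝ) (hK : K.PosDef)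
    (Γ y : Fin n → ℝ) :
    (Γ ⬝ᵥ K.mulVec y)^2 ≤ (Γ ⬝ᵥ K.mulVec Γ) * (y ⬝ᵥ K.mulVec y) := by
  have hKsym : Kᵀ = K := hK.isHermitian.eq
  have key : ∀ t : ℝ, 0 ≤ (Γ ⬝ᵥ K.mulVec Γ) * (t * t)
      + (2 * (Γ ⬝ᵥ K.mulVec y)) * t + (y ⬝ᵥ K.mulVec y) := by
    intro t
    have h := hK.posSemidef.dotProduct_mulVec_nonneg (y + t • Γ)
    simp only [star_trivial] at h
    have expand : (y + t • Γ) ⬝ᵥ K.mulVec (y + t • Γ)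
        = (Γ ⬝ᵥ K.mulVec Γ) * (t * t) + (2 * (Γ ⬝ᵥ K.mulVec y)) * t
          + (y ⬝ᵥ K.mulVec y) := by
      rw [mulVec_add, mulVec_smul, dotProduct_add, add_dotProduct, add_dotProduct,
        dotProduct_smul, smul_dotProduct, smul_dotProduct, dotProduct_smul]
      have h1 : y ⬝ᵥ K.mulVec Γ = Γ ⬝ᵥ K.mulVec y := sym_dot n K hKsym y Γ
      rw [h1]; ring_nf
    rw [expand] at h
    exact h
  have hd := discrim_le_zero key
  rw [discrim] at hd
  nlinarith [hd]

theorem riccati_update_posDef (n : ℕ)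
    (P Q K W : Matrix (Fin n) (Fin n) ℝ) (Γ : Fin n → ℝ)
    (hP : P.PosDef) (hQ : Q.PosDef) (hK : K.PosDef) (hΓ : Γ ≠ 0)
    (R : ℝ) (hR : R = Γ ⬝ᵥ (Q + K).mulVec Γ) :
    (P + Wᵀ * K * W - R⁻¹ • (Wᵀ * K * Matrix.vecMulVec Γ Γ * K * W)).PosDef := by
  have hKsym : Kᵀ = K := hK.isHermitian.eq
  have hc : 0 < Γ ⬝ᵥ K.mulVec Γ := by
    have := hK.dotProduct_mulVec_pos hΓ; simpa using this
  have hq : 0 < Γ ⬝ᵥ Q.mulVec Γ := by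
    have := hQ.dotProduct_mulVec_pos hΓ; simpa using this
  have hRval : R = Γ ⬝ᵥ Q.mulVec Γ + Γ ⬝ᵥ K.mulVec Γ := by
    rw [hR, add_mulVec, dotProduct_add]
  have hRpos : 0 < R := by rw [hRval]; linarith
  have hcR : Γ ⬝ᵥ K.mulVec Γ ≤ R := by rw [hRval]; linarith
  -- rewrite as P + M
  rw [add_sub_assoc]
  apply hP.add_posSemidef
  refine PosSemidef.of_dotProduct_mulVec_nonneg ?_ ?_
  · -- Hermitian
    show _ᴴ = _
    rw [conjTranspose_eq_transpose_of_trivial]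
    have hΓΓ : (vecMulVec Γ Γ)ᵀ = vecMulVec Γ Γ := by
      ext i j; simp [vecMulVec_apply, transpose_apply, mul_comm]
    simp only [transpose_sub, transpose_smul, Matrix.transpose_mul,
      transpose_transpose, hKsym, hΓΓ]
    congr 1 <;> simp [Matrix.mul_assoc]
  · intro x
    simp only [star_trivial, sub_mulVec, dotProduct_sub, smul_mulVec,
      dotProduct_smul]
    set y := W.mulVec x with hy
    have e1 : x ⬝ᵥ (Wᵀ * K * W).mulVec x = y ⬝ᵥ K.mulVec y := by
      rw [Matrix.mul_assoc, ← mulVec_mulVec, dotProduct_mulVec, vecMul_transpose,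
        mulVec_mulVec]
    have e2 : x ⬝ᵥ (Wᵀ * K * vecMulVec Γ Γ * K * W).mulVec x
        = (Γ ⬝ᵥ K.mulVec y) ^ 2 := by
      have hvmv : ∀ v : Fin n → ℝ, (vecMulVec Γ Γ).mulVec v = (Γ ⬝ᵥ v) • Γ := by
        intro v; ext i
        simp [vecMulVec_apply, mulVec, dotProduct, Finset.mul_sum, Finset.sum_mul,
          mul_comm, mul_assoc, mul_left_comm]
      rw [show Wᵀ * K * vecMulVec Γ Γ * K * W = Wᵀ * (K * (vecMulVec Γ Γ * (K * W))) by
        simp [Matrix.mul_assoc]]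
      simp only [← mulVec_mulVec]
      rw [dotProduct_mulVec, vecMul_transpose, ← hy]
      rw [hvmv, mulVec_smul, dotProduct_smul]
      have h1 : y ⬝ᵥ K.mulVec Γ = Γ ⬝ᵥ K.mulVec y := sym_dot n K hKsym y Γ
      rw [smul_eq_mul, h1]; ring
    rw [e1, e2, smul_eq_mul]
    have hcs := cauchy_schwarz_K n K hK Γ y
    have hyK : 0 ≤ y ⬝ᵥ K.mulVec y := by
      have := hK.posSemidef.dotProduct_mulVec_nonneg y; simpa using this
    have : (Γ ⬝ᵥ K.mulVec y) ^ 2 ≤ R * (y ⬝ᵥ K.mulVec y) := by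
      calc (Γ ⬝ᵥ K.mulVec y) ^ 2 ≤ (Γ ⬝ᵥ K.mulVec Γ) * (y ⬝ᵥ K.mulVec y) := hcs
        _ ≤ R * (y ⬝ᵥ K.mulVec y) := by nlinarith
    have h3 : R⁻¹ * (Γ ⬝ᵥ K.mulVec y) ^ 2 ≤ y ⬝ᵥ K.mulVec y := by
      rw [inv_mul_le_iff₀ hRpos]; linarith [this]
    linarith
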